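/- For every integer n ≥ 1 and every real number x with 0 < x < 1, the integral of (t₁,…,t_n) ↦ (1/(1−t₁))·∏_{i=2}^{n}(1/t_i) over the ordered simplex {0 ≤ t₁ ≤ ⋯ ≤ t_n ≤ x} equals the convergent series ∑_{k=1}^{∞} x^k / k^n (the classical polylogarithm Li_n(x)). -/

import Mathlib

/-!
Peeling off the largest coordinate `s = tₙ` turns the integral over the `n`-simplex up to `x`
into `∫₀ˣ s⁻¹ · (integral over the (n-1)-simplex up to s) ds`. Starting from
`(1 - s)⁻¹ = ∑ sᵏ` and integrating term by term (Tonelli, everything being nonnegative), each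
such step sends `∑ sᵏ⁺¹/(k+1)ᵐ` to `∑ xᵏ⁺¹/(k+1)ᵐ⁺¹`.
-/

open MeasureTheory

/-- The ordered simplex `{0 ≤ t₁ ≤ ⋯ ≤ t_n ≤ x} ⊆ ℝⁿ`. -/
def orderedSimplexTo (n : ℕ) (x : ℝ) : Set (Fin n → ℝ) :=
  {t | Monotone t ∧ ∀ i, t i ∈ Set.Icc (0 : ℝ) x}

open Set
open scoped ENNReal

theorem isClosed_orderedSimplexTo (n : ℕ) (x : ℝ) : IsClosed (orderedSimplexTo n x) := by
  simp only [orderedSimplexTo, ofPred_and, ofPred_forall]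
  exact isClosed_monotone.inter
    (isClosed_iInter fun i => isClosed_Icc.preimage (continuous_apply i))

theorem orderedSimplexTo_zero (x : ℝ) : orderedSimplexTo 0 x = univ :=
  eq_univ_of_forall fun _ => ⟨fun i => i.elim0, fun i => i.elim0⟩

theorem volume_orderedSimplexTo_zero (x : ℝ) : volume (orderedSimplexTo 0 x) = 1 := by
  simp [orderedSimplexTo_zero, volume_pi]

theorem mem_orderedSimplexTo_succ_iff {n : ℕ} {x : ℝ} {t : Fin (n + 1) → ℝ} :
    t ∈ orderedSimplexTo (n + 1) x ↔
      t (Fin.last n) ∈ Icc 0 x ∧ Fin.init t ∈ orderedSimplexTo n (t (Fin.last n)) := by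
  constructor
  · rintro ⟨hmono, hmem⟩
    exact ⟨hmem _, hmono.comp Fin.strictMono_castSucc.monotone,
      fun j => ⟨(hmem _).1, hmono (Fin.le_last _)⟩⟩
  · rintro ⟨hlast, hinit, hbound⟩
    have hle_last (i : Fin (n + 1)) : t i ≤ t (Fin.last n) := by
      obtain ⟨i, rfl⟩ | rfl := i.eq_castSucc_or_eq_last
      exacts [(hbound i).2, le_rfl]
    refine ⟨fun i j hij => ?_, fun i => ⟨?_, (hle_last i).trans hlast.2⟩⟩
    · obtain ⟨j, rfl⟩ | rfl := j.eq_castSucc_or_eq_last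
      · obtain ⟨i, rfl⟩ | rfl := i.eq_castSucc_or_eq_last
        · exact hinit (Fin.castSucc_le_castSucc_iff.mp hij)
        · exact absurd hij (not_le.mpr (Fin.castSucc_lt_last j))
      · exact hle_last i
    · obtain ⟨i, rfl⟩ | rfl := i.eq_castSucc_or_eq_last
      exacts [(hbound i).1, hlast.1]

theorem lintegral_orderedSimplexTo_succ {n : ℕ} (x : ℝ) (g : ℝ → (Fin n → ℝ) → ℝ≥0∞)
    (hg : Measurable (Function.uncurry g)) :
    ∫⁻ t in orderedSimplexTo (n + 1) x, g (t (Fin.last n)) (Fin.init t) =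
      ∫⁻ s in Icc 0 x, ∫⁻ u in orderedSimplexTo n s, g s u := by
  let e := MeasurableEquiv.piFinSuccAbove (fun _ : Fin (n + 1) => ℝ) (Fin.last n)
  have he (t : Fin (n + 1) → ℝ) : e t = (t (Fin.last n), Fin.init t) := by simp [e]
  let B : Set (ℝ × (Fin n → ℝ)) := {p | p.1 ∈ Icc 0 x ∧ p.2 ∈ orderedSimplexTo n p.1}
  have hS : orderedSimplexTo (n + 1) x = e ⁻¹' B := by
    ext t; simp [B, he, mem_orderedSimplexTo_succ_iff]
  have hB : MeasurableSet B := by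
    rw [← e.surjective.image_preimage B, ← hS, e.measurableSet_image]
    exact (isClosed_orderedSimplexTo _ _).measurableSet
  have hslice (s : ℝ) : ∫⁻ u, B.indicator (Function.uncurry g) (s, u) =
      (Icc 0 x).indicator (fun s => ∫⁻ u in orderedSimplexTo n s, g s u) s := by
    by_cases hs : s ∈ Icc 0 x
    · rw [indicator_of_mem hs,
        ← lintegral_indicator (isClosed_orderedSimplexTo _ _).measurableSet]
      congr 1 with u
      by_cases hu : u ∈ orderedSimplexTo n s
      · rw [indicator_of_mem hu, indicator_of_mem (show (s, u) ∈ B from ⟨hs, hu⟩)]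
        rfl
      · rw [indicator_of_notMem hu, indicator_of_notMem fun h => hu h.2]
    · simp [B, indicator, hs]
  calc ∫⁻ t in orderedSimplexTo (n + 1) x, g (t (Fin.last n)) (Fin.init t)
      = ∫⁻ t in e ⁻¹' B, Function.uncurry g (e t) := by
        simp only [hS, he, Function.uncurry_apply_pair]
    _ = ∫⁻ p in B, Function.uncurry g p :=
      (volume_preserving_piFinSuccAbove _ _).setLIntegral_comp_preimage_emb
        e.measurableEmbedding _ _
    _ = ∫⁻ s, ∫⁻ u, B.indicator (Function.uncurry g) (s, u) := by
      rw [← lintegral_indicator hB, Measure.volume_eq_prod,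
        lintegral_prod _ (hg.indicator hB).aemeasurable]
    _ = ∫⁻ s in Icc 0 x, ∫⁻ u in orderedSimplexTo n s, g s u := by
      simp only [hslice, lintegral_indicator measurableSet_Icc]

theorem Fin.prod_univ_erase_zero {M : Type*} [CommMonoid M] {n : ℕ} (f : Fin (n + 1) → M) :
    ∏ i ∈ Finset.univ.erase 0, f i = ∏ i : Fin n, f i.succ := by
  rw [Fin.univ_succ, Finset.erase_cons, Finset.prod_map]
  rfl

/-- The integrand of the theorem in `n + 1` variables. -/
noncomputable def polylogIntegrand (n : ℕ) (t : Fin (n + 1) → ℝ) : ℝ :=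
  (1 - t 0)⁻¹ * ∏ i : Fin n, (t i.succ)⁻¹

@[fun_prop]
theorem measurable_polylogIntegrand (n : ℕ) : Measurable (polylogIntegrand n) := by
  unfold polylogIntegrand
  fun_prop

theorem polylogIntegrand_zero (t : Fin 1 → ℝ) :
    polylogIntegrand 0 t = (1 - t (Fin.last 0))⁻¹ := by
  simp [polylogIntegrand]

theorem polylogIntegrand_succ {n : ℕ} (t : Fin (n + 2) → ℝ) :
    polylogIntegrand (n + 1) t = (t (Fin.last (n + 1)))⁻¹ * polylogIntegrand n (Fin.init t) := by
  simp only [polylogIntegrand, Fin.prod_univ_castSucc, Fin.init, Fin.succ_castSucc, Fin.succ_last,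
    Fin.castSucc_zero]
  ring

theorem polylogIntegrand_nonneg {n : ℕ} {x : ℝ} (hx : x < 1) {t : Fin (n + 1) → ℝ}
    (ht : t ∈ orderedSimplexTo (n + 1) x) : 0 ≤ polylogIntegrand n t :=
  mul_nonneg (inv_nonneg.mpr (by linarith [(ht.2 0).2]))
    (Finset.prod_nonneg fun i _ => inv_nonneg.mpr (ht.2 _).1)

theorem lintegral_pow_div (k p : ℕ) {x : ℝ} (hx : 0 ≤ x) :
    ∫⁻ s in Icc 0 x, ENNReal.ofReal (s ^ k / ((k : ℝ) + 1) ^ p) =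
      ENNReal.ofReal (x ^ (k + 1) / ((k : ℝ) + 1) ^ (p + 1)) := by
  rw [← ofReal_integral_eq_lintegral_ofReal (by fun_prop : Continuous _).integrableOn_Icc
    (ae_restrict_of_forall_mem measurableSet_Icc fun s hs => by have := hs.1; positivity),
    integral_Icc_eq_integral_Ioc, ← intervalIntegral.integral_of_le hx,
    intervalIntegral.integral_div, integral_pow]
  congr 1
  rw [zero_pow k.succ_ne_zero, sub_zero]
  field_simp
  ring

theorem lintegral_tsum_pow_div (p : ℕ) {x : ℝ} (hx : 0 ≤ x) :
    ∫⁻ s in Icc 0 x, ∑' k : ℕ, ENNReal.ofReal (s ^ k / ((k : ℝ) + 1) ^ p) =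
      ∑' k : ℕ, ENNReal.ofReal (x ^ (k + 1) / ((k : ℝ) + 1) ^ (p + 1)) := by
  rw [lintegral_tsum fun k => by fun_prop]
  exact tsum_congr fun k => lintegral_pow_div k p hx

theorem lintegral_polylogIntegrand (n : ℕ) {x : ℝ} (hx0 : 0 ≤ x) (hx1 : x < 1) :
    ∫⁻ t in orderedSimplexTo (n + 1) x, ENNReal.ofReal (polylogIntegrand n t) =
      ∑' k : ℕ, ENNReal.ofReal (x ^ (k + 1) / ((k : ℝ) + 1) ^ (n + 1)) := by
  induction n generalizing x with
  | zero =>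
    simp only [polylogIntegrand_zero]
    rw [lintegral_orderedSimplexTo_succ x (fun s _ => ENNReal.ofReal (1 - s)⁻¹) (by fun_prop),
      ← lintegral_tsum_pow_div 0 hx0]
    refine setLIntegral_congr_fun measurableSet_Icc fun s hs => ?_
    have hs1 : s < 1 := hs.2.trans_lt hx1
    simp only [setLIntegral_const, volume_orderedSimplexTo_zero, mul_one, pow_zero, div_one]
    rw [← tsum_geometric_of_lt_one hs.1 hs1, ENNReal.ofReal_tsum_of_nonneg
      (fun k => pow_nonneg hs.1 k) (summable_geometric_of_lt_one hs.1 hs1)]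
  | succ n ih =>
    simp only [polylogIntegrand_succ]
    rw [lintegral_orderedSimplexTo_succ x (fun s u => ENNReal.ofReal (s⁻¹ * polylogIntegrand n u))
      (by fun_prop), ← lintegral_tsum_pow_div (n + 1) hx0,
      setLIntegral_congr Ioc_ae_eq_Icc.symm, setLIntegral_congr Ioc_ae_eq_Icc.symm]
    refine setLIntegral_congr_fun measurableSet_Ioc fun s hs => ?_
    have hs0 : s ≠ 0 := hs.1.ne'
    have hs_inv : 0 ≤ s⁻¹ := inv_nonneg.mpr hs.1.le
    simp only [ENNReal.ofReal_mul hs_inv]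
    rw [lintegral_const_mul' _ _ ENNReal.ofReal_ne_top, ih hs.1.le (hs.2.trans_lt hx1),
      ← ENNReal.tsum_mul_left]
    refine tsum_congr fun k => ?_
    rw [← ENNReal.ofReal_mul hs_inv]
    congr 1
    field_simp
    ring

theorem integral_polylogIntegrand (n : ℕ) {x : ℝ} (hx0 : 0 ≤ x) (hx1 : x < 1) :
    ∫ t in orderedSimplexTo (n + 1) x, polylogIntegrand n t =
      ∑' k : ℕ, x ^ (k + 1) / ((k : ℝ) + 1) ^ (n + 1) := by
  rw [integral_eq_lintegral_of_nonneg_ae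
      (ae_restrict_of_forall_mem (isClosed_orderedSimplexTo _ _).measurableSet
        fun t ht => polylogIntegrand_nonneg hx1 ht)
      (measurable_polylogIntegrand n).aestronglyMeasurable,
    lintegral_polylogIntegrand n hx0 hx1, ENNReal.tsum_toReal_eq fun _ => ENNReal.ofReal_ne_top]
  exact tsum_congr fun k => ENNReal.toReal_ofReal (by positivity)

theorem summable_pow_succ_div_pow (p : ℕ) {x : ℝ} (hx0 : 0 ≤ x) (hx1 : x < 1) :
    Summable fun k : ℕ => x ^ (k + 1) / ((k : ℝ) + 1) ^ p := by
  refine .of_nonneg_of_le (fun k => by positivity) (fun k => div_le_self (by positivity)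
    (one_le_pow₀ (by linarith [k.cast_nonneg (α := ℝ)]))) ?_
  simpa only [pow_succ'] using (summable_geometric_of_lt_one hx0 hx1).mul_left x

/-- For every integer `n ≥ 1` and every real `0 < x < 1`, the integral of
`(t₁,…,t_n) ↦ (1/(1−t₁))·∏_{i=2}^{n}(1/t_i)` over the ordered simplex
`{0 ≤ t₁ ≤ ⋯ ≤ t_n ≤ x}` equals the convergent series
`∑_{k=1}^{∞} x^k / k^n` (the classical polylogarithm `Li_n(x)`). -/
theorem polylog_as_iterated_integral (n : ℕ) (hn : 1 ≤ n) (x : ℝ)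
    (hx0 : 0 < x) (hx1 : x < 1) :
    HasSum (fun k : ℕ => (x : ℂ) ^ (k + 1) / ((k : ℂ) + 1) ^ n)
      (∫ t in orderedSimplexTo n x,
        (1 - (t ⟨0, by omega⟩ : ℂ))⁻¹ *
          ∏ i ∈ Finset.univ.erase (⟨0, by omega⟩ : Fin n), ((t i : ℂ))⁻¹) := by
  obtain ⟨m, rfl⟩ : ∃ m, n = m + 1 := ⟨n - 1, by omega⟩
  have hreal : HasSum (fun k : ℕ => x ^ (k + 1) / ((k : ℝ) + 1) ^ (m + 1))
      (∫ t in orderedSimplexTo (m + 1) x, polylogIntegrand m t) := by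
    rw [integral_polylogIntegrand m hx0.le hx1]
    exact (summable_pow_succ_div_pow (m + 1) hx0.le hx1).hasSum
  convert Complex.hasSum_ofReal.mpr hreal using 1
  · push_cast
    rfl
  · rw [← integral_complex_ofReal]
    congr 1 with t
    simp [polylogIntegrand, Fin.prod_univ_erase_zero]
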